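/- arXiv:math/0701039 — 4 statements merged into one kernel-verified Lean document; each statement's English description precedes it below -/
import Mathlib

section
/- The Jacobian determinant of the map G(α,β) = (log(sin(α+β)/sin α), log(sin(α+β)/sin β)) is identically equal to 1 on the open triangle {(α,β) : α > 0, β > 0, α + β < π}. -/
/-! Each component of `G` is `log f - log g` with `f, g` among `sin α`, `sin β`, `sin (α + β)`,
so every partial derivative is a difference of cotangents. Writing `a = cot α`, `b = cot β`,
`c = cot (α + β)`, the Jacobian is `(c - a)(c - b) - c² = ab - c(a + b)`, which is `1` by the
addition formula `cot (α + β) = (ab - 1) / (a + b)`. -/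

open Real

theorem HasDerivAt.log_div {f g : ℝ → ℝ} {f' g' x : ℝ} (hf : HasDerivAt f f' x)
    (hg : HasDerivAt g g' x) (hfx : f x ≠ 0) (hgx : g x ≠ 0) :
    HasDerivAt (fun y => Real.log (f y / g y)) (f' / f x - g' / g x) x := by
  convert (hf.div hg hgx).log (div_ne_zero hfx hgx) using 1
  · rfl
  · rw [Pi.div_apply]
    field_simp

theorem Real.cot_mul_cot_sub_cot_add_mul_add {α β : ℝ} (hα : sin α ≠ 0) (hβ : sin β ≠ 0)
    (hαβ : sin (α + β) ≠ 0) :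
    cot α * cot β - cot (α + β) * (cot α + cot β) = 1 := by
  simp only [cot_eq_cos_div_sin]
  field_simp
  linear_combination cos (α + β) * sin_add α β - sin (α + β) * cos_add α β

theorem jacobian_G_eq_one (α β : ℝ) (hα : 0 < α) (hβ : 0 < β) (hαβ : α + β < π) :
    (deriv (fun a => Real.log (Real.sin (a + β) / Real.sin a)) α) *
      (deriv (fun b => Real.log (Real.sin (α + b) / Real.sin b)) β) -
    (deriv (fun b => Real.log (Real.sin (α + b) / Real.sin α)) β) *
      (deriv (fun a => Real.log (Real.sin (a + β) / Real.sin β)) α) = 1 := by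
  have hsα : sin α ≠ 0 := (sin_pos_of_pos_of_lt_pi hα (by linarith)).ne'
  have hsβ : sin β ≠ 0 := (sin_pos_of_pos_of_lt_pi hβ (by linarith)).ne'
  have hsαβ : sin (α + β) ≠ 0 := (sin_pos_of_pos_of_lt_pi (by linarith) hαβ).ne'
  have hsin_add_const : HasDerivAt (fun a => sin (a + β)) (cos (α + β)) α :=
    (hasDerivAt_sin _).comp_add_const α β
  have hsin_const_add : HasDerivAt (fun b => sin (α + b)) (cos (α + β)) β :=
    (hasDerivAt_sin _).comp_const_add α β
  rw [(hsin_add_const.log_div (hasDerivAt_sin α) hsαβ hsα).deriv,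
    (hsin_const_add.log_div (hasDerivAt_sin β) hsαβ hsβ).deriv,
    (hsin_const_add.log_div (hasDerivAt_const β (sin α)) hsαβ hsα).deriv,
    (hsin_add_const.log_div (hasDerivAt_const α (sin β)) hsαβ hsβ).deriv]
  simp only [zero_div, sub_zero, ← cot_eq_cos_div_sin]
  linear_combination cot_mul_cot_sub_cot_add_mul_add hsα hsβ hsαβ
end

section
/- The map G(α,β) = (log(sin(α+β)/sin α), log(sin(α+β)/sin β)) is a bijection from the open triangle T = {(α,β) : α > 0, β > 0, α + β < π} onto the amoeba U = {(x,y) ∈ ℝ² : e^{-x} + e^{-y} > 1, e^{-x} + 1 > e^{-y}, e^{-y} + 1 > e^{-x}}, i.e. the set given by the strict triangle inequalities on (e^{-x}, e^{-y}, 1). -/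
open Real

private lemma cos_lt_one_aux {x : ℝ} (h : 0 < Real.sin x) : Real.cos x < 1 := by
  nlinarith [sin_sq_add_cos_sq x, mul_pos h h]

private lemma neg_one_lt_cos_aux {x : ℝ} (h : 0 < Real.sin x) : -1 < Real.cos x := by
  nlinarith [sin_sq_add_cos_sq x, mul_pos h h]

private lemma cos_id (α β : ℝ) (hα : 0 < α) (hβ : 0 < β) (hs : α + β < π) :
    ((sin β / sin (α+β))^2 + 1 - (sin α / sin (α+β))^2) / (2 * (sin β / sin (α+β))) = cos α := by
  have hs0 : 0 < sin (α+β) := sin_pos_of_pos_of_lt_pi (by linarith) hs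
  have hb0 : 0 < sin β := sin_pos_of_pos_of_lt_pi hβ (by linarith)
  have key : sin β^2 + sin (α+β)^2 - sin α^2 = 2 * sin (α+β) * sin β * cos α := by
    rw [sin_add]
    linear_combination (sin α^2) * sin_sq_add_cos_sq β - (sin β^2) * sin_sq_add_cos_sq α
  field_simp
  linear_combination key

private lemma inv_side (a b : ℝ) (ha : 0 < a) (hb : 0 < b)
    (h1 : 1 < a + b) (h2 : a < 1 + b) (h3 : b < 1 + a) :
    0 < arccos ((b^2+1-a^2)/(2*b)) ∧ 0 < arccos ((a^2+1-b^2)/(2*a)) ∧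
    arccos ((b^2+1-a^2)/(2*b)) + arccos ((a^2+1-b^2)/(2*a)) < π ∧
    sin (arccos ((b^2+1-a^2)/(2*b)))
      = a * sin (arccos ((b^2+1-a^2)/(2*b)) + arccos ((a^2+1-b^2)/(2*a))) ∧
    sin (arccos ((a^2+1-b^2)/(2*a)))
      = b * sin (arccos ((b^2+1-a^2)/(2*b)) + arccos ((a^2+1-b^2)/(2*a))) := by
  set cA := (b^2+1-a^2)/(2*b) with hcA
  set cB := (a^2+1-b^2)/(2*a) with hcB
  have hb2 : (0:ℝ) < 2*b := by linarith
  have ha2 : (0:ℝ) < 2*a := by linarith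
  have hcA1 : cA < 1 := by rw [hcA, div_lt_one hb2]; nlinarith
  have hcA2 : -1 < cA := by rw [hcA, lt_div_iff₀ hb2]; nlinarith
  have hcB1 : cB < 1 := by rw [hcB, div_lt_one ha2]; nlinarith
  have hcB2 : -1 < cB := by rw [hcB, lt_div_iff₀ ha2]; nlinarith
  set α := arccos cA with hα
  set β := arccos cB with hβ
  have hα0 : 0 < α := arccos_pos.2 hcA1
  have hβ0 : 0 < β := arccos_pos.2 hcB1
  have hαπ : α < π := lt_of_le_of_ne (arccos_le_pi _) (fun h => by
    have := arccos_eq_pi.1 h; linarith)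
  have hβπ : β < π := lt_of_le_of_ne (arccos_le_pi _) (fun h => by
    have := arccos_eq_pi.1 h; linarith)
  have hcosα : cos α = cA := cos_arccos hcA2.le hcA1.le
  have hcosβ : cos β = cB := cos_arccos hcB2.le hcB1.le
  have hsinα : 0 < sin α := sin_pos_of_pos_of_lt_pi hα0 hαπ
  have hsinβ : 0 < sin β := sin_pos_of_pos_of_lt_pi hβ0 hβπ
  have hsumc : 0 < cA + cB := by
    have h4 : cA + cB = ((b^2+1-a^2)*a + (a^2+1-b^2)*b)/(2*a*b) := by
      rw [hcA, hcB]; field_simp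
    rw [h4]
    apply div_pos ?_ (by positivity)
    nlinarith [mul_pos (mul_pos (show (0:ℝ) < a+b by linarith)
      (show (0:ℝ) < 1+a-b by linarith)) (show (0:ℝ) < 1+b-a by linarith)]
  have hsum : α + β < π := by
    have hmem1 : α ∈ Set.Icc 0 π := ⟨hα0.le, hαπ.le⟩
    have hmem2 : π - β ∈ Set.Icc 0 π := ⟨by linarith, by linarith⟩
    have hc : cos (π - β) < cos α := by
      rw [cos_pi_sub, hcosα, hcosβ]; linarith
    have := (Real.strictAntiOn_cos.lt_iff_gt hmem2 hmem1).1 hc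
    linarith
  have hsq1 : sin α^2 = 1 - cA^2 := by
    have := sin_sq_add_cos_sq α; rw [hcosα] at this; linarith
  have hsq2 : sin β^2 = 1 - cB^2 := by
    have := sin_sq_add_cos_sq β; rw [hcosβ] at this; linarith
  have hab : b * sin α = a * sin β := by
    have hsq : (b * sin α)^2 = (a * sin β)^2 := by
      rw [mul_pow, mul_pow, hsq1, hsq2, hcA, hcB]; field_simp; ring
    have habs : |b * sin α| = |a * sin β| := by
      rw [← Real.sqrt_sq_eq_abs, ← Real.sqrt_sq_eq_abs, hsq]
    rwa [abs_of_pos (by positivity), abs_of_pos (by positivity)] at habs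
  have e2 : b * cA = 1 - a * cB := by rw [hcA, hcB]; field_simp; ring
  refine ⟨hα0, hβ0, hsum, ?_, ?_⟩
  · rw [sin_add, hcosα, hcosβ]
    linear_combination cA * hab - sin α * e2
  · rw [sin_add, hcosα, hcosβ]
    linear_combination (-cB) * hab + (-(sin β)) * e2

private noncomputable def Finv (q : ℝ × ℝ) : ℝ × ℝ :=
  (arccos ((Real.exp (-q.2)^2+1-Real.exp (-q.1)^2)/(2*Real.exp (-q.2))),
   arccos ((Real.exp (-q.1)^2+1-Real.exp (-q.2)^2)/(2*Real.exp (-q.1))))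

theorem G_bijOn :
    Set.BijOn
      (fun p : ℝ × ℝ =>
        (Real.log (Real.sin (p.1 + p.2) / Real.sin p.1),
         Real.log (Real.sin (p.1 + p.2) / Real.sin p.2)))
      {p : ℝ × ℝ | 0 < p.1 ∧ 0 < p.2 ∧ p.1 + p.2 < π}
      {q : ℝ × ℝ | 1 < Real.exp (-q.1) + Real.exp (-q.2) ∧
        Real.exp (-q.1) < 1 + Real.exp (-q.2) ∧
        Real.exp (-q.2) < 1 + Real.exp (-q.1)} := by
  have hmapsG : Set.MapsTo
      (fun p : ℝ × ℝ =>
        (Real.log (Real.sin (p.1 + p.2) / Real.sin p.1),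
         Real.log (Real.sin (p.1 + p.2) / Real.sin p.2)))
      {p : ℝ × ℝ | 0 < p.1 ∧ 0 < p.2 ∧ p.1 + p.2 < π}
      {q : ℝ × ℝ | 1 < Real.exp (-q.1) + Real.exp (-q.2) ∧
        Real.exp (-q.1) < 1 + Real.exp (-q.2) ∧
        Real.exp (-q.2) < 1 + Real.exp (-q.1)} := by
    rintro ⟨α, β⟩ ⟨hα, hβ, hs⟩
    have hs0 : 0 < sin (α+β) := sin_pos_of_pos_of_lt_pi (by linarith) hs
    have hsa : 0 < sin α := sin_pos_of_pos_of_lt_pi hα (by linarith)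
    have hsb : 0 < sin β := sin_pos_of_pos_of_lt_pi hβ (by linarith)
    have hx : Real.exp (-(Real.log (sin (α+β) / sin α))) = sin α / sin (α+β) := by
      rw [← Real.log_inv, inv_div, Real.exp_log (by positivity)]
    have hy : Real.exp (-(Real.log (sin (α+β) / sin β))) = sin β / sin (α+β) := by
      rw [← Real.log_inv, inv_div, Real.exp_log (by positivity)]
    have hca : cos α < 1 := cos_lt_one_aux hsa
    have hcb : cos β < 1 := cos_lt_one_aux hsb
    have hcab : -1 < cos (α+β) := neg_one_lt_cos_aux hs0
    have hI1 : sin (α+β) < sin α + sin β := by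
      rw [sin_add]; nlinarith
    have hI2 : sin α < sin (α+β) + sin β := by
      have hrw : α = (α+β) - β := by ring
      nth_rewrite 1 [hrw]
      rw [sin_sub]
      nlinarith [cos_le_one β, cos_le_one (α+β)]
    have hI3 : sin β < sin (α+β) + sin α := by
      have hrw : β = (α+β) - α := by ring
      nth_rewrite 1 [hrw]
      rw [sin_sub]
      nlinarith [cos_le_one α, cos_le_one (α+β)]
    refine ⟨?_, ?_, ?_⟩
    · show (1:ℝ) < Real.exp _ + Real.exp _
      rw [hx, hy, ← add_div, lt_div_iff₀ hs0, one_mul]; exact hI1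
    · show Real.exp _ < 1 + Real.exp _
      rw [hx, hy, div_lt_iff₀ hs0, add_mul, one_mul,
        div_mul_cancel₀ _ (ne_of_gt hs0)]; exact hI2
    · show Real.exp _ < 1 + Real.exp _
      rw [hx, hy, div_lt_iff₀ hs0, add_mul, one_mul,
        div_mul_cancel₀ _ (ne_of_gt hs0)]; exact hI3
  have hmapsF : Set.MapsTo Finv
      {q : ℝ × ℝ | 1 < Real.exp (-q.1) + Real.exp (-q.2) ∧
        Real.exp (-q.1) < 1 + Real.exp (-q.2) ∧
        Real.exp (-q.2) < 1 + Real.exp (-q.1)}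
      {p : ℝ × ℝ | 0 < p.1 ∧ 0 < p.2 ∧ p.1 + p.2 < π} := by
    rintro ⟨x, y⟩ ⟨h1, h2, h3⟩
    obtain ⟨hα0, hβ0, hsum, _, _⟩ := inv_side (Real.exp (-x)) (Real.exp (-y))
      (exp_pos _) (exp_pos _) h1 h2 h3
    exact ⟨hα0, hβ0, hsum⟩
  apply Set.InvOn.bijOn (f' := Finv) ?_ hmapsG hmapsF
  constructor
  · -- LeftInvOn Finv G T
    rintro ⟨α, β⟩ ⟨hα, hβ, hs⟩
    have hs0 : 0 < sin (α+β) := sin_pos_of_pos_of_lt_pi (by linarith) hs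
    have hsa : 0 < sin α := sin_pos_of_pos_of_lt_pi hα (by linarith)
    have hsb : 0 < sin β := sin_pos_of_pos_of_lt_pi hβ (by linarith)
    have hx : Real.exp (-(Real.log (sin (α+β) / sin α))) = sin α / sin (α+β) := by
      rw [← Real.log_inv, inv_div, Real.exp_log (by positivity)]
    have hy : Real.exp (-(Real.log (sin (α+β) / sin β))) = sin β / sin (α+β) := by
      rw [← Real.log_inv, inv_div, Real.exp_log (by positivity)]
    have h1 := cos_id α β hα hβ hs
    have h2 := cos_id β α hβ hα (by rw [add_comm]; exact hs)
    rw [add_comm β α] at h2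
    show Finv _ = (α, β)
    rw [Finv]
    refine Prod.ext ?_ ?_
    · show arccos _ = α
      rw [hx, hy, h1, arccos_cos hα.le (by linarith)]
    · show arccos _ = β
      rw [hx, hy, h2, arccos_cos hβ.le (by linarith)]
  · -- RightInvOn : G (Finv q) = q on U
    rintro ⟨x, y⟩ ⟨h1, h2, h3⟩
    obtain ⟨hα0, hβ0, hsum, hA, hB⟩ := inv_side (Real.exp (-x)) (Real.exp (-y))
      (exp_pos _) (exp_pos _) h1 h2 h3
    set α := arccos ((Real.exp (-y)^2+1-Real.exp (-x)^2)/(2*Real.exp (-y))) with hαdef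
    set β := arccos ((Real.exp (-x)^2+1-Real.exp (-y)^2)/(2*Real.exp (-x))) with hβdef
    have hs0 : 0 < sin (α+β) := sin_pos_of_pos_of_lt_pi (by linarith) hsum
    have hFx : Finv (x, y) = (α, β) := rfl
    show (fun p : ℝ × ℝ =>
        (Real.log (Real.sin (p.1 + p.2) / Real.sin p.1),
         Real.log (Real.sin (p.1 + p.2) / Real.sin p.2))) (Finv (x, y)) = (x, y)
    rw [hFx]
    refine Prod.ext ?_ ?_
    · show Real.log (sin (α+β) / sin α) = x
      rw [hA, show sin (α+β) / (Real.exp (-x) * sin (α+β)) = (Real.exp (-x))⁻¹ by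
        field_simp, Real.log_inv, Real.log_exp, neg_neg]
    · show Real.log (sin (α+β) / sin β) = y
      rw [hB, show sin (α+β) / (Real.exp (-y) * sin (α+β)) = (Real.exp (-y))⁻¹ by
        field_simp, Real.log_inv, Real.log_exp, neg_neg]
end

section
/- The map F⁻¹(A,B) = (arccos((1-A²+B²)/(2B)), arccos((1+A²-B²)/(2A))) is a two-sided inverse to F(α,β) = (sin α/sin(α+β), sin β/sin(α+β)) between the open triangle T = {α,β > 0, α+β < π} and the region S = {(A,B) : A,B > 0, A+B > 1, A < 1+B, B < 1+A}. -/
/-!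
Place the side of length 1 between the angles `α` and `β` of a triangle, and let `A`, `B` be the
sides opposite `α`, `β`. Then `F` is the law of sines and `F⁻¹` the law of cosines. The triangle
inequalities for `(A, B, 1)` are the inequalities `sin (x + y) < sin x + sin y` between the three
angles. Conversely, for sides satisfying them, the angles `α`, `β` given by the law of cosines
satisfy `A cos β + B cos α = 1` (the two sides project onto the base) and `B sin α = A sin β`
(both are the height over the base), which together give back the law of sines.
-/

open Real

lemma sin_add_lt_sin_add_sin {x y : ℝ} (hx : 0 < x) (hxπ : x < π) (hy : 0 < y) (hyπ : y < π) :
    sin (x + y) < sin x + sin y := by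
  have hsinx := sin_pos_of_pos_of_lt_pi hx hxπ
  have hsiny := sin_pos_of_pos_of_lt_pi hy hyπ
  have hcosy : cos y < 1 := cos_zero ▸ cos_lt_cos_of_nonneg_of_le_pi le_rfl hyπ.le hy
  rw [sin_add]
  nlinarith [cos_le_one x]

lemma law_of_cosines_of_sine_ratios {a b : ℝ} (hab : sin (a + b) ≠ 0) (hb : sin b ≠ 0) :
    (1 - (sin a / sin (a + b)) ^ 2 + (sin b / sin (a + b)) ^ 2) / (2 * (sin b / sin (a + b)))
      = cos a := by
  field_simp
  rw [sin_add]
  linear_combination (-(sin b) ^ 2) * sin_sq_add_cos_sq a + sin a ^ 2 * sin_sq_add_cos_sq b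

lemma cosine_ratio_mem_Ioo {x y z : ℝ} (hy : 0 < y) (hz : 0 < z)
    (hx : x < y + z) (hyx : y < x + z) (hzx : z < x + y) :
    (y ^ 2 + z ^ 2 - x ^ 2) / (2 * y * z) ∈ Set.Ioo (-1) 1 := by
  constructor
  · rw [lt_div_iff₀ (by positivity)]
    nlinarith [mul_pos (sub_pos.2 hx) (by linarith : 0 < x + y + z)]
  · rw [div_lt_one (by positivity)]
    nlinarith [mul_pos (by linarith : 0 < x - y + z) (by linarith : 0 < x + y - z)]

lemma arccos_add_arccos_lt_pi {x y : ℝ} (hx : x ≤ 1) (hy : y ≤ 1) (hxy : 0 < x + y) :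
    arccos x + arccos y < π := by
  have := arccos_lt_arccos (by linarith) (by linarith : -y < x) hx
  rw [arccos_neg] at this
  linarith

lemma law_of_sines_of_unit_projection {α β A B : ℝ}
    (hproj : A * cos β + B * cos α = 1) (hheight : B * sin α = A * sin β) :
    A * sin (α + β) = sin α ∧ B * sin (α + β) = sin β := by
  rw [sin_add]
  constructor
  · linear_combination sin α * hproj - cos α * hheight
  · linear_combination sin β * hproj + cos β * hheight

namespace UnitBaseTriangle

noncomputable section

def angles : Set (ℝ × ℝ) := {p | 0 < p.1 ∧ 0 < p.2 ∧ p.1 + p.2 < π}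

def sides : Set (ℝ × ℝ) :=
  {q | 0 < q.1 ∧ 0 < q.2 ∧ 1 < q.1 + q.2 ∧ q.1 < 1 + q.2 ∧ q.2 < 1 + q.1}

def sidesOfAngles (p : ℝ × ℝ) : ℝ × ℝ :=
  (sin p.1 / sin (p.1 + p.2), sin p.2 / sin (p.1 + p.2))

def anglesOfSides (q : ℝ × ℝ) : ℝ × ℝ :=
  (arccos ((1 - q.1 ^ 2 + q.2 ^ 2) / (2 * q.2)), arccos ((1 + q.1 ^ 2 - q.2 ^ 2) / (2 * q.1)))

end

lemma sidesOfAngles_mem_sides {p : ℝ × ℝ} (hp : p ∈ angles) : sidesOfAngles p ∈ sides := by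
  obtain ⟨ha, hb, hab⟩ := hp
  simp only [sides, sidesOfAngles, Set.mem_ofPred_eq]
  set a := p.1
  set b := p.2
  have hs : 0 < sin (a + b) := sin_pos_of_pos_of_lt_pi (by linarith) hab
  set c := π - (a + b)
  have hc : 0 < c := by linarith
  have hsc : sin c = sin (a + b) := sin_pi_sub _
  have hsa : sin (b + c) = sin a := by rw [show b + c = π - a by ring, sin_pi_sub]
  have hsb : sin (a + c) = sin b := by rw [show a + c = π - b by ring, sin_pi_sub]
  have hone : (1 : ℝ) = sin (a + b) / sin (a + b) := (div_self hs.ne').symm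
  refine ⟨div_pos (sin_pos_of_pos_of_lt_pi ha (by linarith)) hs,
    div_pos (sin_pos_of_pos_of_lt_pi hb (by linarith)) hs, ?_, ?_, ?_⟩
  · rw [← add_div, one_lt_div hs]
    exact sin_add_lt_sin_add_sin ha (by linarith) hb (by linarith)
  · rw [hone, ← add_div, div_lt_div_iff_of_pos_right hs, ← hsa, ← hsc]
    linarith [sin_add_lt_sin_add_sin hb (by linarith) hc (by linarith)]
  · rw [hone, ← add_div, div_lt_div_iff_of_pos_right hs, ← hsb, ← hsc]
    linarith [sin_add_lt_sin_add_sin ha (by linarith) hc (by linarith)]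

lemma anglesOfSides_sidesOfAngles {p : ℝ × ℝ} (hp : p ∈ angles) :
    anglesOfSides (sidesOfAngles p) = p := by
  obtain ⟨ha, hb, hab⟩ := hp
  have hs := (sin_pos_of_pos_of_lt_pi (by linarith) hab).ne'
  have hsa := (sin_pos_of_pos_of_lt_pi ha (by linarith)).ne'
  have hsb := (sin_pos_of_pos_of_lt_pi hb (by linarith)).ne'
  have hcosb := law_of_cosines_of_sine_ratios (a := p.2) (b := p.1) (by rwa [add_comm]) hsa
  rw [add_comm p.2] at hcosb
  refine Prod.ext ?_ ?_
  · simp only [anglesOfSides, sidesOfAngles]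
    rw [law_of_cosines_of_sine_ratios hs hsb, arccos_cos ha.le (by linarith)]
  · simp only [anglesOfSides, sidesOfAngles]
    convert arccos_cos hb.le (by linarith : p.2 ≤ π) using 2
    rw [← hcosb]
    ring

lemma cos_ratios_mem_Ioo {q : ℝ × ℝ} (hq : q ∈ sides) :
    (1 - q.1 ^ 2 + q.2 ^ 2) / (2 * q.2) ∈ Set.Ioo (-1) 1 ∧
      (1 + q.1 ^ 2 - q.2 ^ 2) / (2 * q.1) ∈ Set.Ioo (-1) 1 := by
  obtain ⟨hA, hB, h1, h2, h3⟩ := hq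
  constructor
  · convert cosine_ratio_mem_Ioo hB one_pos (by linarith) (by linarith) h1 using 2 <;> ring
  · convert cosine_ratio_mem_Ioo hA one_pos (by linarith) (by linarith) (by linarith) using 2 <;> ring

lemma anglesOfSides_mem_angles {q : ℝ × ℝ} (hq : q ∈ sides) : anglesOfSides q ∈ angles := by
  obtain ⟨⟨-, hu⟩, ⟨-, hv⟩⟩ := cos_ratios_mem_Ioo hq
  obtain ⟨hA, hB, -, h2, h3⟩ := hq
  have hsum : 0 < (1 - q.1 ^ 2 + q.2 ^ 2) / (2 * q.2) + (1 + q.1 ^ 2 - q.2 ^ 2) / (2 * q.1) := by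
    rw [div_add_div _ _ (by positivity) (by positivity)]
    apply div_pos _ (by positivity)
    nlinarith [mul_pos (add_pos hA hB) (mul_pos (by linarith : 0 < 1 + q.2 - q.1)
      (by linarith : 0 < 1 + q.1 - q.2))]
  exact ⟨arccos_pos.2 hu, arccos_pos.2 hv, arccos_add_arccos_lt_pi hu.le hv.le hsum⟩

lemma sidesOfAngles_anglesOfSides {q : ℝ × ℝ} (hq : q ∈ sides) :
    sidesOfAngles (anglesOfSides q) = q := by
  have hsin : sin ((anglesOfSides q).1 + (anglesOfSides q).2) ≠ 0 := by
    obtain ⟨hα, hβ, hlt⟩ := anglesOfSides_mem_angles hq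
    exact (sin_pos_of_pos_of_lt_pi (add_pos hα hβ) hlt).ne'
  obtain ⟨⟨hu₀, hu₁⟩, ⟨hv₀, hv₁⟩⟩ := cos_ratios_mem_Ioo hq
  obtain ⟨hA, hB, -⟩ := hq
  simp only [sidesOfAngles, anglesOfSides] at hsin ⊢
  set u := (1 - q.1 ^ 2 + q.2 ^ 2) / (2 * q.2) with hu
  set v := (1 + q.1 ^ 2 - q.2 ^ 2) / (2 * q.1) with hv
  have hproj : q.1 * cos (arccos v) + q.2 * cos (arccos u) = 1 := by
    rw [cos_arccos hv₀.le hv₁.le, cos_arccos hu₀.le hu₁.le, hu, hv]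
    field_simp
    ring
  have hheight : q.2 * sin (arccos u) = q.1 * sin (arccos v) := by
    rw [sin_arccos, sin_arccos, ← sqrt_sq hB.le, ← sqrt_sq hA.le, ← sqrt_mul (sq_nonneg _),
      ← sqrt_mul (sq_nonneg _), hu, hv]
    congr 1
    field_simp
    ring
  obtain ⟨hAsin, hBsin⟩ := law_of_sines_of_unit_projection hproj hheight
  refine Prod.ext ?_ ?_
  · rw [← hAsin, mul_div_cancel_right₀ _ hsin]
  · rw [← hBsin, mul_div_cancel_right₀ _ hsin]

end UnitBaseTriangle

theorem F_inv_two_sided_inverse :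
    Set.MapsTo
      (fun p : ℝ × ℝ =>
        (Real.sin p.1 / Real.sin (p.1 + p.2), Real.sin p.2 / Real.sin (p.1 + p.2)))
      {p : ℝ × ℝ | 0 < p.1 ∧ 0 < p.2 ∧ p.1 + p.2 < π}
      {q : ℝ × ℝ | 0 < q.1 ∧ 0 < q.2 ∧ 1 < q.1 + q.2 ∧ q.1 < 1 + q.2 ∧ q.2 < 1 + q.1} ∧
    Set.MapsTo
      (fun q : ℝ × ℝ =>
        (Real.arccos ((1 - q.1 ^ 2 + q.2 ^ 2) / (2 * q.2)),
         Real.arccos ((1 + q.1 ^ 2 - q.2 ^ 2) / (2 * q.1))))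
      {q : ℝ × ℝ | 0 < q.1 ∧ 0 < q.2 ∧ 1 < q.1 + q.2 ∧ q.1 < 1 + q.2 ∧ q.2 < 1 + q.1}
      {p : ℝ × ℝ | 0 < p.1 ∧ 0 < p.2 ∧ p.1 + p.2 < π} ∧
    Set.InvOn
      (fun q : ℝ × ℝ =>
        (Real.arccos ((1 - q.1 ^ 2 + q.2 ^ 2) / (2 * q.2)),
         Real.arccos ((1 + q.1 ^ 2 - q.2 ^ 2) / (2 * q.1))))
      (fun p : ℝ × ℝ =>
        (Real.sin p.1 / Real.sin (p.1 + p.2), Real.sin p.2 / Real.sin (p.1 + p.2)))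
      {p : ℝ × ℝ | 0 < p.1 ∧ 0 < p.2 ∧ p.1 + p.2 < π}
      {q : ℝ × ℝ | 0 < q.1 ∧ 0 < q.2 ∧ 1 < q.1 + q.2 ∧ q.1 < 1 + q.2 ∧ q.2 < 1 + q.1} :=
  open UnitBaseTriangle in
  ⟨fun _ => sidesOfAngles_mem_sides, fun _ => anglesOfSides_mem_angles,
    fun _ => anglesOfSides_sidesOfAngles, fun _ => sidesOfAngles_anglesOfSides⟩
end

section
/- The area (two-dimensional Lebesgue measure) of the amoeba U = {(x,y) ∈ ℝ² : 1 < e^{-x} + e^{-y}, e^{-x} < 1 + e^{-y}, e^{-y} < 1 + e^{-x}} equals π²/2. -/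
/-!
For `x ≠ 0` the fibre of the amoeba over `x` is an open interval whose length depends only on
`u = exp (-|x|)` and equals `log ((1 + u) / (1 - u)) = ∑ 2 u ^ (2k+1) / (2k+1)`. Integrating
termwise, `∫ exp (-(2k+1)|x|) dx = 2 / (2k+1)`, so the area is `∑ 4 / (2k+1)^2 = 4 · π^2/8`.
-/

open Real MeasureTheory Set

theorem hasSum_one_div_odd_sq : HasSum (fun k : ℕ => 1 / (2 * k + 1 : ℝ) ^ 2) (π ^ 2 / 8) := by
  have hzeta := hasSum_zeta_two
  have heven : HasSum (fun k : ℕ => 1 / ((2 * k : ℕ) : ℝ) ^ 2) (π ^ 2 / 24) := by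
    rw [show π ^ 2 / 24 = π ^ 2 / 6 / 4 by ring]
    exact (hzeta.div_const 4).congr_fun fun k => by push_cast; ring
  have hodd : Summable fun k : ℕ => 1 / ((2 * k + 1 : ℕ) : ℝ) ^ 2 :=
    hzeta.summable.comp_injective fun a b h => by simpa using h
  have hsplit := (HasSum.even_add_odd (f := fun n : ℕ => 1 / (n : ℝ) ^ 2)
    heven hodd.hasSum).unique hzeta
  rw [show π ^ 2 / 8 = ∑' k : ℕ, 1 / ((2 * k + 1 : ℕ) : ℝ) ^ 2 by linarith]
  exact hodd.hasSum.congr_fun fun k => by push_cast; rfl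

theorem integrable_exp_neg_mul_abs {c : ℝ} (hc : 0 < c) :
    Integrable fun x : ℝ => exp (-c * |x|) := by
  have hIoi : IntegrableOn (fun x : ℝ => exp (-c * |x|)) (Ioi 0) :=
    (integrableOn_exp_mul_Ioi (neg_lt_zero.2 hc) 0).congr_fun
      (fun x hx => by rw [abs_of_pos hx]) measurableSet_Ioi
  have hIic : IntegrableOn (fun x : ℝ => exp (-c * |x|)) (Iic 0) :=
    (integrableOn_exp_mul_Iic hc 0).congr_fun
      (fun x hx => by rw [abs_of_nonpos hx]; ring_nf) measurableSet_Iic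
  simpa [← integrableOn_univ] using hIic.union hIoi

theorem integral_exp_neg_mul_abs {c : ℝ} (hc : 0 < c) : ∫ x : ℝ, exp (-c * |x|) = 2 / c := by
  rw [integral_comp_abs (f := fun x => exp (-c * x)), integral_exp_mul_Ioi (neg_lt_zero.2 hc)]
  field_simp
  simp

theorem lintegral_exp_neg_abs_pow {n : ℕ} (hn : n ≠ 0) :
    ∫⁻ x : ℝ, ENNReal.ofReal (exp (-|x|) ^ n) = ENNReal.ofReal (2 / n) := by
  have hpos : (0 : ℝ) < n := by positivity
  simp_rw [← exp_nat_mul, mul_neg, ← neg_mul, ← integral_exp_neg_mul_abs hpos]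
  exact (ofReal_integral_eq_lintegral_ofReal (integrable_exp_neg_mul_abs hpos)
    (ae_of_all _ fun x => (exp_pos _).le)).symm

def amoeba : Set (ℝ × ℝ) :=
  {q | 1 < exp (-q.1) + exp (-q.2) ∧ exp (-q.1) < 1 + exp (-q.2) ∧ exp (-q.2) < 1 + exp (-q.1)}

theorem isOpen_amoeba : IsOpen amoeba := by
  simp only [amoeba, ofPred_and]
  exact (isOpen_lt (by fun_prop) (by fun_prop)).inter
    ((isOpen_lt (by fun_prop) (by fun_prop)).inter (isOpen_lt (by fun_prop) (by fun_prop)))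

theorem preimage_mk_amoeba {x : ℝ} (hx : x ≠ 0) :
    Prod.mk x ⁻¹' amoeba = Ioo (-log (1 + exp (-x))) (-log |1 - exp (-x)|) := by
  have hexp : exp (-x) ≠ 1 := by simpa using hx
  ext y
  simp only [amoeba, mem_preimage, mem_ofPred_eq, mem_Ioo, neg_lt, lt_neg,
    lt_log_iff_exp_lt (by positivity : 0 < 1 + exp (-x)),
    log_lt_iff_lt_exp (abs_pos.2 (sub_ne_zero.2 hexp.symm)), abs_lt]
  constructor
  · rintro ⟨h₁, h₂, h₃⟩
    exact ⟨h₃, by linarith, by linarith⟩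
  · rintro ⟨h₃, h₁, h₂⟩
    exact ⟨by linarith, by linarith, h₃⟩

theorem log_one_add_exp_neg_sub_log_abs_one_sub_exp_neg (x : ℝ) :
    log (1 + exp (-x)) - log |1 - exp (-x)| = log (1 + exp (-|x|)) - log (1 - exp (-|x|)) := by
  rcases le_or_gt 0 x with hx | hx
  · rw [abs_of_nonneg hx, abs_of_nonneg (by simpa using hx)]
  · have h₁ : 1 + exp (-x) = exp (-x) * (1 + exp x) := by
      rw [mul_add, ← exp_add]; simp; ring
    have h₂ : |1 - exp (-x)| = exp (-x) * (1 - exp x) := by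
      rw [abs_of_neg (by simpa using hx), mul_sub, ← exp_add]; simp
    rw [abs_of_neg hx, neg_neg, h₁, h₂, log_mul (exp_pos _).ne' (by positivity),
      log_mul (exp_pos _).ne' (sub_pos.2 (exp_lt_one_iff.2 hx)).ne']
    ring

theorem volume_preimage_mk_amoeba {x : ℝ} (hx : x ≠ 0) :
    volume (Prod.mk x ⁻¹' amoeba) =
      ∑' k : ℕ, ENNReal.ofReal (2 * (1 / (2 * k + 1)) * exp (-|x|) ^ (2 * k + 1)) := by
  have hu : |exp (-|x|)| < 1 := by
    rw [abs_of_pos (exp_pos _), exp_lt_one_iff, neg_lt_zero]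
    exact abs_pos.2 hx
  have hsum := hasSum_log_sub_log_of_abs_lt_one hu
  rw [preimage_mk_amoeba hx, volume_Ioo,
    ← ENNReal.ofReal_tsum_of_nonneg (fun k => by positivity) hsum.summable, hsum.tsum_eq,
    ← log_one_add_exp_neg_sub_log_abs_one_sub_exp_neg, neg_sub_neg]

theorem area_amoeba :
    volume {q : ℝ × ℝ | 1 < Real.exp (-q.1) + Real.exp (-q.2) ∧
        Real.exp (-q.1) < 1 + Real.exp (-q.2) ∧
        Real.exp (-q.2) < 1 + Real.exp (-q.1)} = ENNReal.ofReal (π ^ 2 / 2) := by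
  change volume amoeba = _
  have hslices : ∀ᵐ x : ℝ, volume (Prod.mk x ⁻¹' amoeba) =
      ∑' k : ℕ, ENNReal.ofReal (2 * (1 / (2 * k + 1)) * exp (-|x|) ^ (2 * k + 1)) := by
    filter_upwards [compl_mem_ae_iff.2 (measure_singleton (0 : ℝ))] with x hx
    exact volume_preimage_mk_amoeba hx
  have hterm (k : ℕ) :
      ∫⁻ x : ℝ, ENNReal.ofReal (2 * (1 / (2 * k + 1)) * exp (-|x|) ^ (2 * k + 1)) =
        ENNReal.ofReal (4 * (1 / (2 * k + 1) ^ 2)) := by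
    have hk : (0 : ℝ) ≤ 2 * (1 / (2 * k + 1)) := by positivity
    simp_rw [ENNReal.ofReal_mul hk, lintegral_const_mul' _ _ ENNReal.ofReal_ne_top,
      lintegral_exp_neg_abs_pow (Nat.succ_ne_zero _), ← ENNReal.ofReal_mul hk]
    congr 1
    push_cast
    field_simp
    norm_num
  have hsum := hasSum_one_div_odd_sq.mul_left 4
  rw [Measure.volume_eq_prod, Measure.prod_apply isOpen_amoeba.measurableSet,
    lintegral_congr_ae hslices, lintegral_tsum fun k => by fun_prop, tsum_congr hterm,
    ← ENNReal.ofReal_tsum_of_nonneg (fun k => by positivity) hsum.summable, hsum.tsum_eq]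
  congr 1
  ring
end
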